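/- Let α ∈ (1,2] and c > 0. For all matrices U, V ∈ ℝ^{m×n}, it holds that ‖U+V‖_F^α ≤ (1+c)‖U‖_F^α + (2 + (α−1)^{α−1} c^{1−α})‖V‖_F^α. -/

import Mathlib

open Matrix MeasureTheory

/-- Trace inner product `⟨A,B⟩ = tr(AᵀB) = ∑ᵢⱼ Aᵢⱼ Bᵢⱼ`. -/
def dotp {m n : ℕ} (A B : Matrix (Fin m) (Fin n) ℝ) : ℝ :=
  ∑ i, ∑ j, A i j * B i j

/-- Frobenius norm `‖A‖_F = ⟨A,A⟩^{1/2}`. -/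
noncomputable def frobNorm {m n : ℕ} (A : Matrix (Fin m) (Fin n) ℝ) : ℝ :=
  Real.sqrt (dotp A A)

/-- Spectral norm: the `ℓ²→ℓ²` operator norm. -/
noncomputable def specNorm {m n : ℕ} (A : Matrix (Fin m) (Fin n) ℝ) : ℝ :=
  ‖LinearMap.toContinuousLinearMap (Matrix.toEuclideanLin A)‖

/-- Nuclear norm: the trace of `(AᵀA)^{1/2}`. -/
noncomputable def nucNorm {m n : ℕ} (A : Matrix (Fin m) (Fin n) ℝ) : ℝ :=
  ((Matrix.posSemidef_conjTranspose_mul_self A).1.eigenvectorUnitary.1 *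
    diagonal (((↑) : ℝ → ℝ) ∘ (fun x => √x) ∘ (Matrix.posSemidef_conjTranspose_mul_self A).1.eigenvalues) *
    (star (Matrix.posSemidef_conjTranspose_mul_self A).1.eigenvectorUnitary : Matrix (Fin n) (Fin n) ℝ)).trace

/-- Embed a matrix into Euclidean space to view `frobNorm` as a genuine norm. -/
noncomputable def toEuc {m n : ℕ} (A : Matrix (Fin m) (Fin n) ℝ) :
    EuclideanSpace ℝ (Fin m × Fin n) :=
  (WithLp.equiv 2 ((Fin m × Fin n) → ℝ)).symm (fun p => A p.1 p.2)

lemma frobNorm_eq_norm {m n : ℕ} (A : Matrix (Fin m) (Fin n) ℝ) :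
    frobNorm A = ‖toEuc A‖ := by
  rw [EuclideanSpace.norm_eq, frobNorm]
  congr 1
  rw [dotp, Fintype.sum_prod_type]
  simp [toEuc, Real.norm_eq_abs, sq_abs, sq]

lemma toEuc_add {m n : ℕ} (A B : Matrix (Fin m) (Fin n) ℝ) :
    toEuc (A + B) = toEuc A + toEuc B := rfl

lemma frobNorm_nonneg {m n : ℕ} (A : Matrix (Fin m) (Fin n) ℝ) :
    0 ≤ frobNorm A := Real.sqrt_nonneg _

lemma frobNorm_add_le {m n : ℕ} (A B : Matrix (Fin m) (Fin n) ℝ) :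
    frobNorm (A + B) ≤ frobNorm A + frobNorm B := by
  rw [frobNorm_eq_norm, frobNorm_eq_norm, frobNorm_eq_norm, toEuc_add]
  exact norm_add_le _ _

/-- Subadditivity of `x ↦ x ^ p` for `p ∈ [0,1]` on nonnegative reals. -/
lemma real_rpow_add_le_add_rpow {a b p : ℝ} (ha : 0 ≤ a) (hb : 0 ≤ b)
    (hp : 0 ≤ p) (hp1 : p ≤ 1) : (a + b) ^ p ≤ a ^ p + b ^ p := by
  have h := NNReal.rpow_add_le_add_rpow a.toNNReal b.toNNReal hp hp1
  have h' : ((a.toNNReal : ℝ) + (b.toNNReal : ℝ)) ^ p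
      ≤ (a.toNNReal : ℝ) ^ p + (b.toNNReal : ℝ) ^ p := by
    exact_mod_cast h
  rwa [Real.coe_toNNReal _ ha, Real.coe_toNNReal _ hb] at h'

/-- Young-type step: `α a^{α-1} b ≤ c a^α + (α-1)^{α-1} c^{1-α} b^α`. -/
lemma young_step (α c : ℝ) (hα1 : 1 < α) (hc : 0 < c) (a b : ℝ)
    (ha : 0 ≤ a) (hb : 0 ≤ b) :
    α * (a ^ (α - 1) * b) ≤ c * a ^ α + (α - 1) ^ (α - 1) * c ^ (1 - α) * b ^ α := by
  have hα0 : (0:ℝ) < α := by linarith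
  have hα1' : (0:ℝ) < α - 1 := by linarith
  set K := c * α / (α - 1) with hK
  have hKpos : 0 < K := by positivity
  set s := K ^ ((α - 1) / α) with hs
  have hspos : 0 < s := Real.rpow_pos_of_pos hKpos _
  have hpq : Real.HolderConjugate (α / (α - 1)) α := by
    rw [Real.holderConjugate_iff]
    constructor
    · rw [lt_div_iff₀ hα1']; linarith
    · field_simp; ring
  have hy := Real.young_inequality_of_nonneg
    (a := s * a ^ (α - 1)) (b := α / s * b)
    (mul_nonneg hspos.le (Real.rpow_nonneg ha _))
    (mul_nonneg (by positivity : (0:ℝ) ≤ α / s) hb) hpq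
  have hL : s * a ^ (α - 1) * (α / s * b) = α * (a ^ (α - 1) * b) := by
    field_simp
  have e1 : (a ^ (α - 1)) ^ (α / (α - 1)) = a ^ α := by
    rw [← Real.rpow_mul ha]; congr 1; field_simp
  have e2 : s ^ (α / (α - 1)) = K := by
    rw [hs, ← Real.rpow_mul hKpos.le,
      show (α - 1) / α * (α / (α - 1)) = 1 by field_simp, Real.rpow_one]
  have h1 : (s * a ^ (α - 1)) ^ (α / (α - 1)) / (α / (α - 1)) = c * a ^ α := by
    rw [Real.mul_rpow hspos.le (Real.rpow_nonneg ha _), e1, e2, hK]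
    field_simp
  have e3 : s ^ (-α) = K ^ (1 - α) := by
    rw [hs, ← Real.rpow_mul hKpos.le]; congr 1; field_simp; ring
  have e5 : K ^ (1 - α) = c ^ (1 - α) * α ^ (1 - α) * (α - 1) ^ (α - 1) := by
    rw [hK, Real.div_rpow (by positivity) hα1'.le, Real.mul_rpow hc.le hα0.le,
      div_eq_mul_inv, ← Real.rpow_neg hα1'.le, show -(1 - α) = α - 1 by ring]
  have h2 : (α / s * b) ^ α / α = (α - 1) ^ (α - 1) * c ^ (1 - α) * b ^ α := by
    rw [Real.mul_rpow (by positivity) hb, Real.div_rpow hα0.le hspos.le,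
      div_eq_mul_inv (α ^ α), ← Real.rpow_neg hspos.le, e3, e5]
    have : α ^ α * (c ^ (1 - α) * α ^ (1 - α) * (α - 1) ^ (α - 1))
        = α * (c ^ (1 - α) * (α - 1) ^ (α - 1)) := by
      have hαα : α ^ α * α ^ (1 - α) = α := by
        rw [← Real.rpow_add hα0, show α + (1 - α) = 1 by ring, Real.rpow_one]
      calc α ^ α * (c ^ (1 - α) * α ^ (1 - α) * (α - 1) ^ (α - 1))
          = (α ^ α * α ^ (1 - α)) * (c ^ (1 - α) * (α - 1) ^ (α - 1)) := by ring
        _ = α * (c ^ (1 - α) * (α - 1) ^ (α - 1)) := by rw [hαα]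
    rw [this]
    field_simp
  calc α * (a ^ (α - 1) * b) = s * a ^ (α - 1) * (α / s * b) := hL.symm
    _ ≤ (s * a ^ (α - 1)) ^ (α / (α - 1)) / (α / (α - 1)) + (α / s * b) ^ α / α := hy
    _ = c * a ^ α + (α - 1) ^ (α - 1) * c ^ (1 - α) * b ^ α := by rw [h1, h2]

/-- The scalar version of the main inequality. -/
lemma scalar_ineq (α c : ℝ) (hα1 : 1 < α) (hα2 : α ≤ 2) (hc : 0 < c) (a b : ℝ)
    (ha : 0 ≤ a) (hb : 0 ≤ b) :
    (a + b) ^ α ≤ (1 + c) * a ^ α + (2 + (α - 1) ^ (α - 1) * c ^ (1 - α)) * b ^ α := by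
  have hα0 : (0:ℝ) < α := by linarith
  rcases hb.eq_or_lt with hb0 | hb0
  · subst hb0
    have h0 : (0:ℝ) ^ α = 0 := Real.zero_rpow hα0.ne'
    have haα : 0 ≤ a ^ α := Real.rpow_nonneg ha _
    rw [add_zero, h0]
    nlinarith
  · -- MVT
    have habl : a < a + b := by linarith
    obtain ⟨x, hxmem, hx⟩ := exists_hasDerivAt_eq_slope (fun y => y ^ α)
      (fun y => α * y ^ (α - 1)) habl
      (fun y _ => (Real.hasDerivAt_rpow_const (Or.inr hα1.le)).continuousAt.continuousWithinAt)
      (fun y _ => Real.hasDerivAt_rpow_const (Or.inr hα1.le))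
    have hxpos : 0 ≤ x := le_trans ha hxmem.1.le
    have heq : (a + b) ^ α = a ^ α + α * x ^ (α - 1) * b := by
      have hb' : a + b - a = b := by ring
      rw [hb'] at hx
      field_simp at hx
      linarith [hx]
    have hx1 : x ^ (α - 1) ≤ (a + b) ^ (α - 1) :=
      Real.rpow_le_rpow hxpos hxmem.2.le (by linarith)
    have hx2 : (a + b) ^ (α - 1) ≤ a ^ (α - 1) + b ^ (α - 1) :=
      real_rpow_add_le_add_rpow ha hb (by linarith) (by linarith)
    have hbα : b ^ (α - 1) * b = b ^ α := by
      rw [← Real.rpow_add_one hb0.ne' (α - 1), sub_add_cancel]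
    have hyoung := young_step α c hα1 hc a b ha hb
    have hbαnn : 0 ≤ b ^ α := Real.rpow_nonneg hb _
    have hstep : α * x ^ (α - 1) * b ≤ α * (a ^ (α - 1) * b) + α * b ^ α := by
      have h1 : x ^ (α - 1) * b ≤ (a ^ (α - 1) + b ^ (α - 1)) * b :=
        mul_le_mul_of_nonneg_right (le_trans hx1 hx2) hb
      calc α * x ^ (α - 1) * b ≤ α * ((a ^ (α - 1) + b ^ (α - 1)) * b) := by
            rw [mul_assoc]; exact mul_le_mul_of_nonneg_left h1 hα0.le
        _ = α * (a ^ (α - 1) * b) + α * (b ^ (α - 1) * b) := by ring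
        _ = α * (a ^ (α - 1) * b) + α * b ^ α := by rw [hbα]
    have hαb : α * b ^ α ≤ 2 * b ^ α := mul_le_mul_of_nonneg_right hα2 hbαnn
    rw [heq]
    nlinarith

/-- For `α ∈ (1,2]`, `c > 0`, and matrices `U`, `V`:
`‖U+V‖_F^α ≤ (1+c)‖U‖_F^α + (2 + (α−1)^{α−1} c^{1−α})‖V‖_F^α`. -/
theorem stmt_3 {m n : ℕ} (α c : ℝ) (hα : α ∈ Set.Ioc (1:ℝ) 2) (hc : 0 < c)
    (U V : Matrix (Fin m) (Fin n) ℝ) :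
    frobNorm (U + V) ^ α
      ≤ (1 + c) * frobNorm U ^ α
        + (2 + (α - 1) ^ (α - 1) * c ^ (1 - α)) * frobNorm V ^ α := by
  obtain ⟨hα1, hα2⟩ := hα
  have htri : frobNorm (U + V) ≤ frobNorm U + frobNorm V := frobNorm_add_le U V
  have h1 : frobNorm (U + V) ^ α ≤ (frobNorm U + frobNorm V) ^ α :=
    Real.rpow_le_rpow (frobNorm_nonneg _) htri (by linarith)
  exact le_trans h1 (scalar_ineq α c hα1 hα2 hc _ _ (frobNorm_nonneg U) (frobNorm_nonneg V))
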